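/- Let (G,·,∘) be a bi-skew brace such that the group (G,∘) is finite cyclic. Then every subgroup of (G,∘) is a left ideal of (G,·,∘). -/

import Mathlib

def IsSkewBrace {G : Type*} (dot circ : Group G) : Prop :=
  ∀ σ τ κ : G,
    circ.mul σ (dot.mul τ κ) =
      dot.mul (dot.mul (circ.mul σ τ) (dot.inv σ)) (circ.mul σ κ)

def gammaFun {G : Type*} (dot circ : Group G) (σ τ : G) : G :=
  dot.mul (dot.inv σ) (circ.mul σ τ)

def IsSubgroupOf {G : Type*} (S : Group G) (H : Set G) : Prop :=
  S.one ∈ H ∧ (∀ a ∈ H, ∀ b ∈ H, S.mul a b ∈ H) ∧ (∀ a ∈ H, S.inv a ∈ H)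

def IsLeftIdeal {G : Type*} (dot circ : Group G) (H : Set G) : Prop :=
  IsSubgroupOf dot H ∧ ∀ σ : G, ∀ τ ∈ H, gammaFun dot circ σ τ ∈ H

def IsStrongLeftIdeal {G : Type*} (dot circ : Group G) (H : Set G) : Prop :=
  IsLeftIdeal dot circ H ∧
    ∀ σ : G, ∀ τ ∈ H, dot.mul (dot.mul σ τ) (dot.inv σ) ∈ H

def IsCharacteristicSubgroupOf {G : Type*} (S : Group G) (H : Set G) : Prop :=
  IsSubgroupOf S H ∧
    ∀ f : G ≃ G, (∀ a b : G, f (S.mul a b) = S.mul (f a) (f b)) → ∀ a ∈ H, f a ∈ H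

def oppGroup {G : Type*} (dot : Group G) : Group G :=
  letI := dot
  { mul := fun a b => b * a
    one := (1 : G)
    inv := fun a => a⁻¹
    div := fun a b => b⁻¹ * a
    div_eq_mul_inv := fun _ _ => rfl
    npow := fun n x => @npowRec G ⟨(1 : G)⟩ ⟨fun a b => b * a⟩ n x
    npow_zero := fun _ => rfl
    npow_succ := fun _ _ => rfl
    zpow := fun n x => @zpowRec G ⟨(1 : G)⟩ ⟨fun a b => b * a⟩ ⟨fun a => a⁻¹⟩
      (@npowRec G ⟨(1 : G)⟩ ⟨fun a b => b * a⟩) n x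
    zpow_zero' := fun _ => rfl
    zpow_succ' := fun _ _ => rfl
    zpow_neg' := fun _ _ => rfl
    mul_assoc := fun a b c => (mul_assoc c b a).symm
    one_mul := fun a => mul_one a
    mul_one := fun a => one_mul a
    inv_mul_cancel := fun a => mul_inv_cancel a }

def lam {G : Type*} (S : Group G) (σ : G) : Equiv.Perm G :=
  letI := S; Equiv.mulLeft σ

def rho {G : Type*} (S : Group G) (σ : G) : Equiv.Perm G :=
  letI := S; Equiv.mulRight σ⁻¹

/-! The gamma maps `δ(σ)` of the skew brace `(G,∘,·)` are endomorphisms of `(G,∘)`, and the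
gamma maps `γ(σ)` of `(G,·,∘)` are their inverses, hence endomorphisms of `(G,∘)` as well. In a
cyclic group every endomorphism is a power map, so every subgroup `H` of `(G,∘)` is invariant under
all `γ(σ)` and `δ(σ)`. Closure of `H` under `·` then follows from `τ · κ = τ ∘ δ(τ)(κ)` and
`τ⁻¹ = γ(τ)(τ̄)`, where `τ̄` is the inverse of `τ` in `(G,∘)`. -/

section GammaFun

variable {G : Type*} (A B : Group G)

theorem mul_gammaFun (σ τ : G) : A.mul σ (gammaFun A B σ τ) = B.mul σ τ := by
  let _ := A
  exact mul_inv_cancel_left σ (B.mul σ τ)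

theorem gammaFun_gammaFun (σ τ : G) : gammaFun A B σ (gammaFun B A σ τ) = τ := by
  change A.mul (A.inv σ) (B.mul σ (gammaFun B A σ τ)) = τ
  rw [mul_gammaFun B A]
  let _ := A
  exact inv_mul_cancel_left σ τ

theorem gammaFun_inv (hone : B.one = A.one) (σ : G) : gammaFun A B σ (B.inv σ) = A.inv σ := by
  have hσ : B.mul σ (B.inv σ) = A.one := by
    rw [← hone]
    let _ := B
    exact mul_inv_cancel σ
  rw [gammaFun, hσ]
  let _ := A
  exact mul_one σ⁻¹

variable {A B}

theorem IsSkewBrace.one_eq (h : IsSkewBrace A B) : B.one = A.one := by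
  have hB : ∀ x, B.mul B.one x = x := fun x => by let _ := B; exact one_mul x
  have h1 := h B.one A.one A.one
  rw [hB, hB] at h1
  let _ := A
  change (1 : G) * 1 = 1 * B.one⁻¹ * 1 at h1
  simp only [mul_one, one_mul] at h1
  exact inv_eq_one.mp h1.symm

theorem IsSkewBrace.gammaFun_mul (h : IsSkewBrace A B) (σ τ κ : G) :
    gammaFun A B σ (A.mul τ κ) = A.mul (gammaFun A B σ τ) (gammaFun A B σ κ) := by
  let _ := A
  change σ⁻¹ * B.mul σ (τ * κ) = σ⁻¹ * B.mul σ τ * (σ⁻¹ * B.mul σ κ)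
  rw [show B.mul σ (τ * κ) = B.mul σ τ * σ⁻¹ * B.mul σ κ from h σ τ κ]
  group

theorem IsSkewBrace.gammaFun_mul_of_swap (h : IsSkewBrace B A) (σ τ κ : G) :
    gammaFun A B σ (B.mul τ κ) = B.mul (gammaFun A B σ τ) (gammaFun A B σ κ) := by
  calc gammaFun A B σ (B.mul τ κ)
      = gammaFun A B σ (B.mul (gammaFun B A σ (gammaFun A B σ τ))
          (gammaFun B A σ (gammaFun A B σ κ))) := by
        rw [gammaFun_gammaFun, gammaFun_gammaFun]
    _ = gammaFun A B σ (gammaFun B A σ (B.mul (gammaFun A B σ τ) (gammaFun A B σ κ))) := by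
        rw [h.gammaFun_mul]
    _ = B.mul (gammaFun A B σ τ) (gammaFun A B σ κ) := gammaFun_gammaFun A B σ _

end GammaFun

theorem IsSubgroupOf.map_mem_of_cyclic {G : Type*} {S : Group G}
    (hcyc : ∃ g : G, ∀ x : G, ∃ n : ℤ, x = S.zpow n g) {H : Set G} (hH : IsSubgroupOf S H)
    (f : G → G) (hf : ∀ a b : G, f (S.mul a b) = S.mul (f a) (f b)) {a : G} (ha : a ∈ H) :
    f a ∈ H := by
  let _ := S
  have : IsCyclic G := ⟨hcyc.imp fun g hg x => (hg x).imp fun _ hn => hn.symm⟩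
  let K : Subgroup G :=
    { carrier := H
      one_mem' := hH.1
      mul_mem' := fun {a b} ha hb => hH.2.1 a ha b hb
      inv_mem' := fun {a} => hH.2.2 a }
  obtain ⟨m, hm⟩ := (MonoidHom.mk' f hf).map_cyclic
  change MonoidHom.mk' f hf a ∈ K
  exact hm a ▸ K.zpow_mem ha m

theorem stmt9_general {G : Type*} (dot circ : Group G)
    (h2 : IsSkewBrace circ dot)
    (hcyc : ∃ g : G, ∀ x : G, ∃ n : ℤ, x = circ.zpow n g)
    (H : Set G) (hH : IsSubgroupOf circ H) :
    IsLeftIdeal dot circ H := by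
  have hγ : ∀ σ, ∀ τ ∈ H, gammaFun dot circ σ τ ∈ H := fun σ _ hτ =>
    hH.map_mem_of_cyclic hcyc _ (h2.gammaFun_mul_of_swap σ) hτ
  have hδ : ∀ σ, ∀ τ ∈ H, gammaFun circ dot σ τ ∈ H := fun σ _ hτ =>
    hH.map_mem_of_cyclic hcyc _ (h2.gammaFun_mul σ) hτ
  refine ⟨⟨?_, fun τ hτ κ hκ => ?_, fun τ hτ => ?_⟩, hγ⟩
  · exact h2.one_eq ▸ hH.1
  · exact mul_gammaFun circ dot τ κ ▸ hH.2.1 τ hτ _ (hδ τ κ hκ)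
  · exact gammaFun_inv dot circ h2.one_eq.symm τ ▸ hγ τ _ (hH.2.2 τ hτ)

/-- If `(G,·,∘)` is a bi-skew brace and `(G,∘)` is finite cyclic, then every
subgroup of `(G,∘)` is a left ideal of `(G,·,∘)`. -/
theorem stmt9 {G : Type*} [Finite G] (dot circ : Group G)
    (h1 : IsSkewBrace dot circ) (h2 : IsSkewBrace circ dot)
    (hcyc : ∃ g : G, ∀ x : G, ∃ n : ℤ, x = circ.zpow n g)
    (H : Set G) (hH : IsSubgroupOf circ H) :
    IsLeftIdeal dot circ H :=
  stmt9_general dot circ h2 hcyc H hH
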